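/- arXiv:physics/0508177 — 2 statements merged into one kernel-verified Lean document; each statement's English description precedes it below -/
import Mathlib

section
/- Let Z ≥ 1 be a real number. For all ρ₁, ρ₂ > 0, the Bohr-model energy of a helium-like ion E(ρ₁,ρ₂) := (1/2)(1/ρ₁² + 1/ρ₂²) − Z/ρ₁ − Z/ρ₂ + 1/(ρ₁+ρ₂) satisfies E(ρ₁,ρ₂) ≥ −(Z − 1/4)², with equality if and only if ρ₁ = ρ₂ = 1/(Z − 1/4). In particular the Bohr-model ground state energy is E_B = −(Z − 1/4)². -/
set_option maxHeartbeats 1000000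

lemma bohr_aux (Z a b : ℝ) (hZ : 1 ≤ Z) (ha : 0 < a) (hb : 0 < b) :
    0 ≤ (a^2+b^2)*(a+b) - 2*Z*a*b*(a+b)^2 + 2*a^2*b^2 + 2*(Z-1/4)^2*a^2*b^2*(a+b) ∧
    ((a^2+b^2)*(a+b) - 2*Z*a*b*(a+b)^2 + 2*a^2*b^2 + 2*(Z-1/4)^2*a^2*b^2*(a+b) = 0 ↔
      a = 1/(Z-1/4) ∧ b = 1/(Z-1/4)) := by
  have hc : (0:ℝ) < Z - 1/4 := by linarith
  have hab : 0 < a*b := mul_pos ha hb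
  by_cases hs : 0 ≤ a + b - a*b
  · -- SOS decomposition : 2P = (a+b)(a+b-2c ab)² + (a+b-ab)(a-b)²
    have hdec : 2*((a^2+b^2)*(a+b) - 2*Z*a*b*(a+b)^2 + 2*a^2*b^2 + 2*(Z-1/4)^2*a^2*b^2*(a+b))
        = (a+b)*(a+b-2*(Z-1/4)*a*b)^2 + (a+b-a*b)*(a-b)^2 := by ring
    have h1 : 0 ≤ (a+b)*(a+b-2*(Z-1/4)*a*b)^2 := by positivity
    have h2 : 0 ≤ (a+b-a*b)*(a-b)^2 := mul_nonneg hs (sq_nonneg _)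
    refine ⟨by linarith, ?_, ?_⟩
    · intro h0
      have e1 : (a+b)*(a+b-2*(Z-1/4)*a*b)^2 = 0 := by linarith
      have e2 : a+b-2*(Z-1/4)*a*b = 0 := by
        have := pow_eq_zero_iff (n := 2) (by norm_num) |>.mp
          ((mul_eq_zero.mp e1).resolve_left (by positivity))
        linarith
      have e3 : (a+b-a*b)*(a-b)^2 = 0 := by linarith
      rcases mul_eq_zero.mp e3 with h | h
      · exfalso
        nlinarith [mul_nonneg (show (0:ℝ) ≤ Z-1 by linarith) hab.le]
      · have hba : a = b := by
          have := pow_eq_zero_iff (n := 2) (by norm_num) |>.mp h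
          linarith
        subst hba
        have h4 : 2*a*((Z-1/4)*a - 1) = 0 := by linear_combination (-1)*e2
        have h5 : (Z-1/4)*a - 1 = 0 :=
          (mul_eq_zero.mp h4).resolve_left (by positivity)
        have h6 : a = 1/(Z-1/4) := by
          rw [eq_div_iff hc.ne']
          linear_combination h5
        exact ⟨h6, h6⟩
    · rintro ⟨rfl, rfl⟩
      have hcu : (Z-1/4)*(1/(Z-1/4)) = 1 := by rw [mul_one_div]; exact div_self hc.ne'
      linear_combination (4*(1/(Z-1/4))^3*((Z-1/4)*(1/(Z-1/4)) - 1)) * hcu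
  · -- a*b > a+b : strictly positive
    push_neg at hs
    have hQ : 0 < (a+b)^2 - 2*Z*a*b*(a+b) + 2*(Z-1/4)^2*a^2*b^2 := by
      have hid : (a+b)^2 - 2*Z*a*b*(a+b) + 2*(Z-1/4)^2*a^2*b^2
          = (a*b-a-b)*((2*Z-1)*a*b-a-b) + 2*(Z-3/4)^2*a^2*b^2 := by ring
      rw [hid]
      have h1 : 0 < a*b-a-b := by linarith
      have h2 : 0 < (2*Z-1)*a*b-a-b := by
        have := mul_nonneg (show (0:ℝ) ≤ 2*Z-2 by linarith) hab.le
        nlinarith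
      nlinarith [mul_pos h1 h2, mul_nonneg (sq_nonneg (Z-3/4)) (sq_nonneg (a*b))]
    have hP : 0 < (a^2+b^2)*(a+b) - 2*Z*a*b*(a+b)^2 + 2*a^2*b^2 + 2*(Z-1/4)^2*a^2*b^2*(a+b) := by
      have hid : (a^2+b^2)*(a+b) - 2*Z*a*b*(a+b)^2 + 2*a^2*b^2 + 2*(Z-1/4)^2*a^2*b^2*(a+b)
          = (a+b)*((a+b)^2 - 2*Z*a*b*(a+b) + 2*(Z-1/4)^2*a^2*b^2) + 2*a*b*(a*b-a-b) := by ring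
      rw [hid]
      have k1 := mul_pos (add_pos ha hb) hQ
      have k2 := mul_pos hab (show 0 < a*b-a-b by linarith)
      nlinarith [k1, k2]
    refine ⟨hP.le, ?_, ?_⟩
    · intro h0; exact absurd h0 hP.ne'
    · rintro ⟨h1, h2⟩
      exfalso
      have hca : (Z-1/4)*a = 1 := by rw [h1, mul_one_div]; exact div_self hc.ne'
      have hcb : (Z-1/4)*b = 1 := by rw [h2, mul_one_div]; exact div_self hc.ne'
      have A : (Z-1/4)^2*(a*b) = 1 := by
        rw [show (Z-1/4)^2*(a*b) = ((Z-1/4)*a)*((Z-1/4)*b) from by ring, hca, hcb, mul_one]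
      have B : (Z-1/4)^2*a = Z-1/4 := by
        rw [show (Z-1/4)^2*a = (Z-1/4)*((Z-1/4)*a) from by ring, hca, mul_one]
      have C : (Z-1/4)^2*b = Z-1/4 := by
        rw [show (Z-1/4)^2*b = (Z-1/4)*((Z-1/4)*b) from by ring, hcb, mul_one]
      have D : 0 < (Z-1/4)*(Z-1/4)*(a*b-(a+b)) :=
        mul_pos (mul_pos hc hc) (by linarith)
      nlinarith [A, B, C, D]

/-- Bohr-model energy of a helium-like ion with nuclear charge `Z ≥ 1`:
`E(ρ₁,ρ₂) = (1/2)(1/ρ₁² + 1/ρ₂²) − Z/ρ₁ − Z/ρ₂ + 1/(ρ₁+ρ₂)` satisfies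
`E ≥ −(Z − 1/4)²` with equality iff `ρ₁ = ρ₂ = 1/(Z − 1/4)`. -/
theorem bohr_helium_ground_state_energy (Z : ℝ) (hZ : 1 ≤ Z)
    (ρ₁ ρ₂ : ℝ) (hρ₁ : 0 < ρ₁) (hρ₂ : 0 < ρ₂) :
    (1/2) * (1/ρ₁^2 + 1/ρ₂^2) - Z/ρ₁ - Z/ρ₂ + 1/(ρ₁ + ρ₂) ≥ -(Z - 1/4)^2 ∧
    ((1/2) * (1/ρ₁^2 + 1/ρ₂^2) - Z/ρ₁ - Z/ρ₂ + 1/(ρ₁ + ρ₂) = -(Z - 1/4)^2 ↔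
      ρ₁ = 1/(Z - 1/4) ∧ ρ₂ = 1/(Z - 1/4)) := by
  obtain ⟨hge, hiff⟩ := bohr_aux Z ρ₁ ρ₂ hZ hρ₁ hρ₂
  have hD : (0:ℝ) < 2*ρ₁^2*ρ₂^2*(ρ₁+ρ₂) := by positivity
  have key : (1/2) * (1/ρ₁^2 + 1/ρ₂^2) - Z/ρ₁ - Z/ρ₂ + 1/(ρ₁ + ρ₂) + (Z - 1/4)^2 =
      ((ρ₁^2+ρ₂^2)*(ρ₁+ρ₂) - 2*Z*ρ₁*ρ₂*(ρ₁+ρ₂)^2 + 2*ρ₁^2*ρ₂^2 + 2*(Z-1/4)^2*ρ₁^2*ρ₂^2*(ρ₁+ρ₂))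
      / (2*ρ₁^2*ρ₂^2*(ρ₁+ρ₂)) := by
    field_simp
    ring
  constructor
  · have := div_nonneg hge hD.le
    linarith
  · rw [← hiff]
    constructor
    · intro h
      have h0 : ((ρ₁^2+ρ₂^2)*(ρ₁+ρ₂) - 2*Z*ρ₁*ρ₂*(ρ₁+ρ₂)^2 + 2*ρ₁^2*ρ₂^2 + 2*(Z-1/4)^2*ρ₁^2*ρ₂^2*(ρ₁+ρ₂)) / (2*ρ₁^2*ρ₂^2*(ρ₁+ρ₂)) = 0 := by linarith
      exact (div_eq_zero_iff.mp h0).resolve_right hD.ne'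
    · intro h
      rw [h, zero_div] at key
      linarith
end

section
/- Let φ₁, φ₂ : ℝ³ → ℝ be twice continuously differentiable, let S ∈ ℝ³, and define ψ(x,y) := φ₁(x)·φ₂(y)·(1 + (1/2)‖x − y‖). Then there exist real constants C₀, C₁ and ε > 0, M ≥ 0 such that |ψ(S + u/2, S − u/2) − C₀ − C₁‖u‖| ≤ M‖u‖² for all ‖u‖ < ε, if and only if φ₂(S)·∇φ₁(S) − φ₁(S)·∇φ₂(S) = 0. -/
/-!
Write `F(u) = φ₁(S + u/2) φ₂(S - u/2)`, so that `ψ(S + u/2, S - u/2) = F(u) (1 + ‖u‖/2)`.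
By Taylor's theorem `F(u) = F(0) + ⟪∇F(0), u⟫ + O(‖u‖²)` with `∇F(0) = (φ₂ ∇φ₁ - φ₁ ∇φ₂)(S) / 2`.
If this gradient vanishes, `C₀ = F(0)`, `C₁ = F(0)/2` give the expansion. Conversely, subtracting
the expansion at `-u` from the one at `u` kills the direction-independent terms `C₀ + C₁‖u‖`,
leaving `F(u) - F(-u) = O(‖u‖²)`; but `F(u) - F(-u) = 2 ⟪∇F(0), u⟫ + O(‖u‖²)`, and a linear form
that is `O(‖u‖²)` vanishes.
-/

open Filter Topology Asymptotics

section NormedSpace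

variable {E : Type*} [NormedAddCommGroup E]

theorem isBigO_norm_sq_nhds_zero_iff {f : E → ℝ} :
    f =O[𝓝 0] (fun u => ‖u‖ ^ 2) ↔
      ∃ ε > (0 : ℝ), ∃ M ≥ (0 : ℝ), ∀ u : E, ‖u‖ < ε → |f u| ≤ M * ‖u‖ ^ 2 := by
  constructor
  · intro h
    obtain ⟨M, hM, hMf⟩ := h.exists_nonneg
    obtain ⟨ε, hε, hball⟩ := Metric.eventually_nhds_iff.mp hMf.bound
    exact ⟨ε, hε, M, hM, fun u hu => by simpa using hball (by simpa using hu)⟩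
  · rintro ⟨ε, hε, M, -, hball⟩
    refine IsBigO.of_bound M (Metric.eventually_nhds_iff.mpr ⟨ε, hε, fun u hu => ?_⟩)
    simpa using hball u (by simpa using hu)

theorem Asymptotics.IsBigO.comp_neg_norm_sq {f : E → ℝ} (h : f =O[𝓝 0] fun u => ‖u‖ ^ 2) :
    (fun u => f (-u)) =O[𝓝 0] fun u => ‖u‖ ^ 2 := by
  simpa [Function.comp_def] using h.comp_tendsto (continuous_neg.tendsto' (0 : E) 0 neg_zero)

variable [NormedSpace ℝ E]

theorem ContDiffAt.isBigO_sub_sub_fderiv {G : Type*} [NormedAddCommGroup G] [NormedSpace ℝ G]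
    {f : E → G} {x : E} (hf : ContDiffAt ℝ 2 f x) :
    (fun y => f y - f x - fderiv ℝ f x (y - x)) =O[𝓝 x] fun y => ‖y - x‖ ^ 2 := by
  obtain ⟨K, t, ht, hlip⟩ := (hf.fderiv_right (m := 1) le_rfl).exists_lipschitzOnWith
  have hdiff : ∀ᶠ y in 𝓝 x, DifferentiableAt ℝ f y :=
    (hf.eventually (by simp)).mono fun y hy => hy.differentiableAt (by norm_num)
  obtain ⟨r, hr, hball⟩ := Metric.mem_nhds_iff.mp (inter_mem ht hdiff)
  refine IsBigO.of_bound K ?_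
  filter_upwards [Metric.ball_mem_nhds x hr] with y hy
  set s := Metric.closedBall x ‖y - x‖
  have hs : s ⊆ t ∩ {z | DifferentiableAt ℝ f z} :=
    (Metric.closedBall_subset_ball (by rwa [← dist_eq_norm])).trans hball
  have hbound : ∀ z ∈ s, ‖fderiv ℝ f z - fderiv ℝ f x‖ ≤ K * ‖y - x‖ := fun z hz =>
    (hlip.norm_sub_le (hs hz).1 (hs (Metric.mem_closedBall_self (norm_nonneg _))).1).trans
      (by gcongr; rwa [← dist_eq_norm])
  have hmvt : ‖f y - f x - fderiv ℝ f x (y - x)‖ ≤ K * ‖y - x‖ * ‖y - x‖ :=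
    (convex_closedBall x ‖y - x‖).norm_image_sub_le_of_norm_fderiv_le' (fun z hz => (hs hz).2)
      hbound (Metric.mem_closedBall_self (norm_nonneg _)) (by simp [s, dist_eq_norm])
  simpa [mul_assoc, sq] using hmvt

theorem ContinuousLinearMap.eq_zero_of_isBigO_norm_sq (ℓ : E →L[ℝ] ℝ)
    (h : ℓ =O[𝓝 0] fun u => ‖u‖ ^ 2) : ℓ = 0 :=
  ℓ.hasFDerivAt.unique ((by simpa using h : ⇑ℓ =O[𝓝 0] fun u => ‖u - 0‖ ^ 2).hasFDerivAt one_lt_two)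

theorem Asymptotics.IsBigO.of_mul_tendsto {α : Type*} {l : Filter α} {f g k : α → ℝ} {c : ℝ}
    (h : (fun x => f x * k x) =O[l] g) (hk : Tendsto k l (𝓝 c)) (hc : c ≠ 0) : f =O[l] g := by
  have hinv : (fun x => (k x)⁻¹) =O[l] fun _ => (1 : ℝ) := (hk.inv₀ hc).isBigO_one ℝ
  refine (h.mul hinv).congr' ?_ (Eventually.of_forall fun x => mul_one (g x))
  filter_upwards [hk.eventually_ne hc] with x hx
  field_simp

theorem exists_isBigO_mul_one_add_norm_iff {F : E → ℝ} (hF : ContDiffAt ℝ 2 F 0) (a : ℝ) :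
    (∃ C₀ C₁ : ℝ, (fun u => F u * (1 + a * ‖u‖) - C₀ - C₁ * ‖u‖) =O[𝓝 0] fun u => ‖u‖ ^ 2) ↔
      fderiv ℝ F 0 = 0 := by
  have hk : Tendsto (fun u : E => 1 + a * ‖u‖) (𝓝 0) (𝓝 1) := by
    have hcont : Continuous fun u : E => 1 + a * ‖u‖ := by fun_prop
    simpa using hcont.tendsto 0
  have hR : (fun u => F u - F 0 - fderiv ℝ F 0 u) =O[𝓝 0] fun u => ‖u‖ ^ 2 := by
    simpa using hF.isBigO_sub_sub_fderiv
  constructor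
  · rintro ⟨C₀, C₁, hG⟩
    have hodd : (fun u => F u - F (-u)) =O[𝓝 0] fun u => ‖u‖ ^ 2 := by
      refine IsBigO.of_mul_tendsto ((hG.sub hG.comp_neg_norm_sq).congr_left fun u => ?_) hk
        one_ne_zero
      simp only [norm_neg]
      ring
    refine (fderiv ℝ F 0).eq_zero_of_isBigO_norm_sq ?_
    refine (((hodd.sub hR).add hR.comp_neg_norm_sq).const_mul_left (1 / 2)).congr_left fun u => ?_
    simp only [map_neg]
    ring
  · intro hF'
    refine ⟨F 0, a * F 0, ((hR.mul (hk.isBigO_one ℝ)).congr_left fun u => ?_).congr_right (by simp)⟩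
    simp only [hF', zero_apply]
    ring

end NormedSpace

theorem hasGradientAt_centerOfMass_mul {E : Type*} [NormedAddCommGroup E] [InnerProductSpace ℝ E]
    [CompleteSpace E] {φ₁ φ₂ : E → ℝ} {S : E} (h₁ : DifferentiableAt ℝ φ₁ S)
    (h₂ : DifferentiableAt ℝ φ₂ S) :
    HasGradientAt (fun u => φ₁ (S + (1 / 2 : ℝ) • u) * φ₂ (S - (1 / 2 : ℝ) • u))
      ((1 / 2 : ℝ) • (φ₂ S • gradient φ₁ S - φ₁ S • gradient φ₂ S)) 0 := by
  have hA : HasFDerivAt (fun u : E => S + (1 / 2 : ℝ) • u)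
      ((1 / 2 : ℝ) • ContinuousLinearMap.id ℝ E) 0 :=
    ((hasFDerivAt_id 0).const_smul _).const_add S
  have hB : HasFDerivAt (fun u : E => S - (1 / 2 : ℝ) • u)
      (-((1 / 2 : ℝ) • ContinuousLinearMap.id ℝ E)) 0 :=
    ((hasFDerivAt_id 0).const_smul _).const_sub S
  have h1 := (by simpa using h₁.hasFDerivAt : HasFDerivAt φ₁ _ (S + (1 / 2 : ℝ) • 0)).comp 0 hA
  have h2 := (by simpa using h₂.hasFDerivAt : HasFDerivAt φ₂ _ (S - (1 / 2 : ℝ) • 0)).comp 0 hB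
  rw [hasGradientAt_iff_hasFDerivAt]
  refine (h1.mul h2).congr_fderiv ?_
  ext v
  simp only [one_div, Function.comp_apply, smul_zero, add_zero, sub_zero,
    ContinuousLinearMap.comp_neg, ContinuousLinearMap.comp_smulₛₗ, map_inv₀, Real.ringHom_apply,
    ContinuousLinearMap.comp_id, smul_neg, add_apply, neg_apply, smul_apply, smul_eq_mul,
    map_smul, map_sub, toDual_gradient, sub_apply]
  ring

/-- For distinct orbitals `φ₁, φ₂`, the trial wave function
`ψ(x,y) = φ₁(x)φ₂(y)(1 + ‖x−y‖/2)` admits in center-of-mass coordinates a local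
expansion `C₀ + C₁‖u‖ + O(‖u‖²)` near `u = 0` iff
`φ₂(S)∇φ₁(S) − φ₁(S)∇φ₂(S) = 0`. -/
theorem cusp_condition_two_orbitals (φ₁ φ₂ : EuclideanSpace ℝ (Fin 3) → ℝ)
    (h₁ : ContDiff ℝ 2 φ₁) (h₂ : ContDiff ℝ 2 φ₂)
    (S : EuclideanSpace ℝ (Fin 3)) :
    (∃ C₀ C₁ : ℝ, ∃ ε > (0:ℝ), ∃ M ≥ (0:ℝ),
      ∀ u : EuclideanSpace ℝ (Fin 3), ‖u‖ < ε →
        |φ₁ (S + (1/2 : ℝ) • u) * φ₂ (S - (1/2 : ℝ) • u) *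
            (1 + (1/2) * ‖(S + (1/2 : ℝ) • u) - (S - (1/2 : ℝ) • u)‖)
          - C₀ - C₁ * ‖u‖| ≤ M * ‖u‖^2)
    ↔ φ₂ S • gradient φ₁ S - φ₁ S • gradient φ₂ S = 0 := by
  set F := fun u : EuclideanSpace ℝ (Fin 3) => φ₁ (S + (1 / 2 : ℝ) • u) * φ₂ (S - (1 / 2 : ℝ) • u)
  have hF : ContDiff ℝ 2 F := by fun_prop
  have hgrad := hasGradientAt_centerOfMass_mul (h₁.differentiable two_ne_zero S)
    (h₂.differentiable two_ne_zero S)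
  have hsep : ∀ u : EuclideanSpace ℝ (Fin 3), (S + (1 / 2 : ℝ) • u) - (S - (1 / 2 : ℝ) • u) = u :=
    fun u => by module
  simp_rw [hsep, ← isBigO_norm_sq_nhds_zero_iff]
  rw [exists_isBigO_mul_one_add_norm_iff hF.contDiffAt,
    (hasGradientAt_iff_hasFDerivAt.mp hgrad).fderiv, LinearIsometryEquiv.map_eq_zero_iff,
    smul_eq_zero]
  norm_num
end
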